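/- arXiv:2403.10142 — 3 statements merged into one kernel-verified Lean document; each statement's English description precedes it below -/
import Mathlib

section
/- Let (P_k, W_k), k ∈ ℕ, be PW-pairs of real n×n matrices, let L_k := L(P_k, W_k) ⊆ ℝⁿ × ℝⁿ, and let L be a linear subspace of ℝⁿ × ℝⁿ such that the orthogonal projections of ℝⁿ × ℝⁿ onto L_k converge in operator norm to the orthogonal projection onto L. Then there exists a PW-pair (P, W) with L = L(P, W). (The class Z_n^{P,W} of subspaces represented by PW-pairs is closed in the metric space of subspaces with metric d(L₁,L₂) = ‖P_{L₁} − P_{L₂}‖.) -/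
open Matrix

/-- A PW-pair: symmetric matrices `P`, `W` with `P² = P` and `W(I−P) = I−P`. -/
def IsPWPair {n : ℕ} (P W : Matrix (Fin n) (Fin n) ℝ) : Prop :=
  P.IsSymm ∧ W.IsSymm ∧ P * P = P ∧ W * (1 - P) = 1 - P

/-- The subspace `L(P,W) = {(Pp, Wp) : p ∈ ℝⁿ}` of `ℝⁿ × ℝⁿ`, as a set. -/
def LPW {n : ℕ} (P W : Matrix (Fin n) (Fin n) ℝ) :
    Set ((Fin n → ℝ) × (Fin n → ℝ)) :=
  {q | ∃ p : Fin n → ℝ, q = (P *ᵥ p, W *ᵥ p)}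

/-- The Euclidean inner product on the product space `ℝⁿ × ℝⁿ`. -/
def inner2 {n : ℕ} (q r : (Fin n → ℝ) × (Fin n → ℝ)) : ℝ :=
  q.1 ⬝ᵥ r.1 + q.2 ⬝ᵥ r.2

/-- `Q` is the orthogonal projection of `ℝⁿ × ℝⁿ` onto the set `S`
(w.r.t. the product Euclidean structure): it maps into `S`, fixes `S`,
and is self-adjoint for the Euclidean inner product. -/
def IsOrthProj {n : ℕ}
    (Q : ((Fin n → ℝ) × (Fin n → ℝ)) →L[ℝ] ((Fin n → ℝ) × (Fin n → ℝ)))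
    (S : Set ((Fin n → ℝ) × (Fin n → ℝ))) : Prop :=
  (∀ v, Q v ∈ S) ∧ (∀ v ∈ S, Q v = v) ∧ (∀ u v, inner2 (Q u) v = inner2 u (Q v))

/-!
With `J (x, y) = (-y, x)`, the subspaces `L(P, W)` are exactly the Lagrangian ones, `L = (J L)ᗮ`,
and a subspace is Lagrangian iff its orthogonal projection `Q` satisfies `Q J + J Q = J`. This
identity survives limits, so it passes from the `Q k` to the projection onto `L`.

Conversely, if `L` is Lagrangian and `P` is the orthogonal projection onto its image `D` under
`(x, y) ↦ x`, then `(x, y) ↦ x + (1 - P) y` is an isomorphism `L ≃ ℝⁿ`: Lagrangianity gives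
`{0} × Dᗮ ⊆ L` and `L ∩ ({0} × D) = 0`. Its inverse has the form `p ↦ (P p, W p)` with `W`
symmetric and `W (1 - P) = 1 - P`.
-/

abbrev E2 (n : ℕ) := (Fin n → ℝ) × (Fin n → ℝ)

/-- Multiplication by `i` under `ℝⁿ × ℝⁿ ≅ ℂⁿ`. -/
def rotJ (n : ℕ) : E2 n →L[ℝ] E2 n :=
  (-ContinuousLinearMap.snd ℝ (Fin n → ℝ) (Fin n → ℝ)).prod
    (ContinuousLinearMap.fst ℝ (Fin n → ℝ) (Fin n → ℝ))

/-- `S` is its own complement for the standard symplectic form `ω(w, r) = inner2 (rotJ n w) r`. -/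
def IsLagrangian {n : ℕ} (S : Set (E2 n)) : Prop :=
  ∀ w, w ∈ S ↔ ∀ r ∈ S, inner2 (rotJ n w) r = 0

namespace Matrix

theorem isSymm_iff_mulVec_dotProduct {m R : Type*} [Fintype m] [CommSemiring R]
    {M : Matrix m m R} :
    M.IsSymm ↔ ∀ x y, M *ᵥ x ⬝ᵥ y = x ⬝ᵥ M *ᵥ y := by
  have key : ∀ x y, x ⬝ᵥ M *ᵥ y = Mᵀ *ᵥ x ⬝ᵥ y := fun x y => by
    rw [dotProduct_mulVec, mulVec_transpose]
  constructor
  · intro hM x y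
    rw [key, hM.eq]
  · intro h
    refine ext_iff_mulVec.2 fun x => dotProduct_eq _ _ fun y => ?_
    rw [← key, h]

end Matrix

section Inner2

variable {n : ℕ}

@[simp]
theorem rotJ_apply (v : E2 n) : rotJ n v = (-v.2, v.1) := rfl

theorem rotJ_rotJ (v : E2 n) : rotJ n (rotJ n v) = -v := by
  simp [Prod.ext_iff]

theorem inner2_rotJ_left (q r : E2 n) : inner2 (rotJ n q) r = q.1 ⬝ᵥ r.2 - q.2 ⬝ᵥ r.1 := by
  simp only [inner2, rotJ_apply, neg_dotProduct]
  ring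

theorem inner2_sub_left (a b c : E2 n) : inner2 (a - b) c = inner2 a c - inner2 b c := by
  simp only [inner2, Prod.fst_sub, Prod.snd_sub, sub_dotProduct]
  ring

theorem inner2_neg_left (a c : E2 n) : inner2 (-a) c = -inner2 a c := by
  simp only [inner2, Prod.fst_neg, Prod.snd_neg, neg_dotProduct]
  ring

theorem inner2_zero_left (c : E2 n) : inner2 0 c = 0 := by
  simp [inner2]

theorem inner2_self_eq_zero {a : E2 n} : inner2 a a = 0 ↔ a = 0 := by
  have h1 : 0 ≤ a.1 ⬝ᵥ a.1 := Finset.sum_nonneg fun i _ => mul_self_nonneg (a.1 i)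
  have h2 : 0 ≤ a.2 ⬝ᵥ a.2 := Finset.sum_nonneg fun i _ => mul_self_nonneg (a.2 i)
  constructor
  · intro h
    rw [inner2] at h
    exact Prod.ext (dotProduct_self_eq_zero.1 (by linarith))
      (dotProduct_self_eq_zero.1 (by linarith))
  · rintro rfl
    exact inner2_zero_left 0

end Inner2

namespace IsPWPair

variable {n : ℕ} {P W : Matrix (Fin n) (Fin n) ℝ}

theorem W_mul_P (h : IsPWPair P W) : W * P = W - 1 + P := by
  have h4 := h.2.2.2
  rw [Matrix.mul_sub, Matrix.mul_one] at h4
  rw [← sub_sub_cancel W (W * P), h4]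
  abel

theorem P_mul_W (h : IsPWPair P W) : P * W = W - 1 + P := by
  have := congrArg Matrix.transpose h.W_mul_P
  rwa [Matrix.transpose_mul, h.1.eq, h.2.1.eq, Matrix.transpose_add, Matrix.transpose_sub,
    Matrix.transpose_one, h.1.eq, h.2.1.eq] at this

theorem one_sub_P_mul_W (h : IsPWPair P W) : (1 - P) * W = 1 - P := by
  rw [Matrix.sub_mul, Matrix.one_mul, h.P_mul_W]
  abel

theorem mem_LPW_iff (h : IsPWPair P W) {q : E2 n} : q ∈ LPW P W ↔ W *ᵥ q.1 = P *ᵥ q.2 := by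
  constructor
  · rintro ⟨p, rfl⟩
    simp only [mulVec_mulVec, h.W_mul_P, h.P_mul_W]
  · intro hq
    have hx : P *ᵥ q.1 = q.1 := by
      have := congrArg ((1 - P) *ᵥ ·) hq
      simp only [mulVec_mulVec, h.one_sub_P_mul_W, Matrix.sub_mul, Matrix.one_mul, h.2.2.1,
        sub_self, zero_mulVec, sub_mulVec, one_mulVec] at this
      exact (sub_eq_zero.1 this).symm
    refine ⟨q.1 + (1 - P) *ᵥ q.2, Prod.ext ?_ ?_⟩
    · simp only [mulVec_add, mulVec_mulVec, Matrix.mul_sub, Matrix.mul_one, h.2.2.1, sub_self,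
        zero_mulVec, add_zero, hx]
    · dsimp only
      rw [mulVec_add, mulVec_mulVec, h.2.2.2, hq, sub_mulVec, one_mulVec]
      abel

theorem inner2_rotJ_mk (h : IsPWPair P W) (w : E2 n) (p : Fin n → ℝ) :
    inner2 (rotJ n w) (P *ᵥ p, W *ᵥ p) = (W *ᵥ w.1 - P *ᵥ w.2) ⬝ᵥ p := by
  rw [inner2_rotJ_left, sub_dotProduct, Matrix.isSymm_iff_mulVec_dotProduct.1 h.1,
    Matrix.isSymm_iff_mulVec_dotProduct.1 h.2.1]

theorem isLagrangian (h : IsPWPair P W) : IsLagrangian (LPW P W) := by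
  intro w
  rw [h.mem_LPW_iff]
  constructor
  · rintro hw r ⟨p, rfl⟩
    rw [h.inner2_rotJ_mk, hw, sub_self, zero_dotProduct]
  · intro hw
    refine sub_eq_zero.1 (dotProduct_eq_zero _ fun p => ?_)
    rw [← h.inner2_rotJ_mk]
    exact hw _ ⟨p, rfl⟩

end IsPWPair

namespace IsOrthProj

variable {n : ℕ} {Q : E2 n →L[ℝ] E2 n} {S : Set (E2 n)}

theorem inner2_sub_apply (hQ : IsOrthProj Q S) (v : E2 n) {s : E2 n} (hs : s ∈ S) :
    inner2 (v - Q v) s = 0 := by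
  rw [inner2_sub_left, hQ.2.2, hQ.2.1 s hs, sub_self]

theorem apply_eq_zero (hQ : IsOrthProj Q S) {v : E2 n} (hv : ∀ s ∈ S, inner2 v s = 0) :
    Q v = 0 :=
  inner2_self_eq_zero.1 (by rw [hQ.2.2, hQ.2.1 _ (hQ.1 v)]; exact hv _ (hQ.1 v))

theorem anticomm_of_isLagrangian (hQ : IsOrthProj Q S) (hS : IsLagrangian S) (v : E2 n) :
    Q (rotJ n v) + rotJ n (Q v) = rotJ n v := by
  have hres : rotJ n (v - Q v) ∈ S := (hS _).2 fun r hr => by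
    rw [rotJ_rotJ, inner2_neg_left, hQ.inner2_sub_apply v hr, neg_zero]
  have hQv : Q (rotJ n (Q v)) = 0 := hQ.apply_eq_zero ((hS _).1 (hQ.1 v))
  have : Q (rotJ n v) = rotJ n (v - Q v) := by
    rw [← hQ.2.1 _ hres, ← sub_eq_zero, ← map_sub, ← map_sub, sub_sub_cancel, hQv]
  rw [this, map_sub, sub_add_cancel]

theorem isLagrangian_of_anticomm (hQ : IsOrthProj Q S)
    (hJ : ∀ v, Q (rotJ n v) + rotJ n (Q v) = rotJ n v) : IsLagrangian S := by
  intro w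
  constructor
  · intro hw r hr
    have hQJ : Q (rotJ n w) = 0 := by simpa [hQ.2.1 w hw] using hJ w
    rw [← hQ.2.1 r hr, ← hQ.2.2, hQJ, inner2_zero_left]
  · intro hw
    have h := hJ w
    rw [hQ.apply_eq_zero hw, zero_add] at h
    have := congrArg (rotJ n) h
    rw [rotJ_rotJ, rotJ_rotJ, neg_inj] at this
    exact this ▸ hQ.1 w

end IsOrthProj

theorem isClosed_setOf_anticomm (n : ℕ) :
    IsClosed {Q : E2 n →L[ℝ] E2 n | ∀ v, Q (rotJ n v) + rotJ n (Q v) = rotJ n v} := by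
  simp only [Set.ofPred_forall]
  exact isClosed_iInter fun v => isClosed_eq (by fun_prop) continuous_const

theorem Submodule.exists_isSymm_projection_matrix {ι : Type*} [Fintype ι] [DecidableEq ι]
    (D : Submodule ℝ (ι → ℝ)) :
    ∃ P : Matrix ι ι ℝ, P.IsSymm ∧ P * P = P ∧ ∀ x, P *ᵥ x = x ↔ x ∈ D := by
  let K : Submodule ℝ (EuclideanSpace ℝ ι) :=
    D.comap (WithLp.linearEquiv 2 ℝ (ι → ℝ)).toLinearMap
  let P : Matrix ι ι ℝ := (Matrix.toEuclideanCLM (𝕜 := ℝ)).symm K.starProjection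
  refine ⟨P, ?_, ?_, fun x => ?_⟩
  · have := (Matrix.toEuclideanCLM (𝕜 := ℝ)).symm.map_star' K.starProjection
    rw [(isSelfAdjoint_starProjection K).star_eq] at this
    rw [Matrix.IsSymm, ← Matrix.conjTranspose_eq_transpose_of_trivial,
      ← Matrix.star_eq_conjTranspose]
    exact this.symm
  · rw [← map_mul, K.isIdempotentElem_starProjection.eq]
  · calc P *ᵥ x = x ↔ Matrix.toEuclideanCLM (𝕜 := ℝ) P (WithLp.toLp 2 x) = WithLp.toLp 2 x := by
          rw [Matrix.toEuclideanCLM_toLp, (WithLp.toLp_injective 2).eq_iff]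
      _ ↔ x ∈ D := by
          rw [StarAlgEquiv.apply_symm_apply]
          exact K.starProjection_eq_self_iff

section LagrangianChart

variable {n : ℕ} {P : Matrix (Fin n) (Fin n) ℝ}

theorem IsLagrangian.fst_dotProduct_snd {S : Set (E2 n)} (hS : IsLagrangian S) {q r : E2 n}
    (hq : q ∈ S) (hr : r ∈ S) : q.1 ⬝ᵥ r.2 = q.2 ⬝ᵥ r.1 := by
  have := (hS q).1 hq r hr
  rwa [inner2_rotJ_left, sub_eq_zero] at this

theorem IsLagrangian.mk_zero_one_sub_mulVec_mem {S : Set (E2 n)} (hS : IsLagrangian S)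
    (hP : P.IsSymm) (hPS : ∀ x, P *ᵥ x = x ↔ ∃ y, (x, y) ∈ S) (y : Fin n → ℝ) :
    ((0 : Fin n → ℝ), (1 - P) *ᵥ y) ∈ S := by
  refine (hS _).2 fun r hr => ?_
  have hr1 : P *ᵥ r.1 = r.1 := (hPS r.1).2 ⟨r.2, hr⟩
  rw [inner2_rotJ_left, zero_dotProduct, zero_sub, neg_eq_zero,
    Matrix.isSymm_iff_mulVec_dotProduct.1 (Matrix.isSymm_one.sub hP), sub_mulVec, one_mulVec, hr1,
    sub_self, dotProduct_zero]

theorem IsLagrangian.eq_zero_of_mk_zero_mem {S : Set (E2 n)} (hS : IsLagrangian S)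
    (hPS : ∀ x, P *ᵥ x = x ↔ ∃ y, (x, y) ∈ S) {y : Fin n → ℝ} (hy : ((0 : Fin n → ℝ), y) ∈ S)
    (hPy : P *ᵥ y = y) : y = 0 := by
  obtain ⟨z, hz⟩ := (hPS y).1 hPy
  have := hS.fst_dotProduct_snd hy hz
  rwa [zero_dotProduct, eq_comm, dotProduct_self_eq_zero] at this

theorem IsLagrangian.coord_dotProduct_snd_comm {S : Set (E2 n)} (hS : IsLagrangian S)
    (hP : P.IsSymm) {q r : E2 n} (hq : q ∈ S) (hr : r ∈ S) :
    (q.1 + (1 - P) *ᵥ q.2) ⬝ᵥ r.2 = q.2 ⬝ᵥ (r.1 + (1 - P) *ᵥ r.2) := by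
  rw [add_dotProduct, dotProduct_add, hS.fst_dotProduct_snd hq hr, dotProduct_comm q.2 r.1,
    Matrix.isSymm_iff_mulVec_dotProduct.1 (Matrix.isSymm_one.sub hP)]

variable (P) in
/-- Inverse of the parametrisation `p ↦ (P p, W p)` of `L(P, W)`. -/
def lagrangianCoord (L : Submodule ℝ (E2 n)) : L →ₗ[ℝ] (Fin n → ℝ) :=
  (LinearMap.fst ℝ _ _ + (1 - P).mulVecLin ∘ₗ LinearMap.snd ℝ _ _) ∘ₗ L.subtype

variable {L : Submodule ℝ (E2 n)}

theorem lagrangianCoord_apply (q : L) :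
    lagrangianCoord P L q = (q : E2 n).1 + (1 - P) *ᵥ (q : E2 n).2 := rfl

theorem mulVec_lagrangianCoord (hPP : P * P = P) (hPL : ∀ x, P *ᵥ x = x ↔ ∃ y, (x, y) ∈ L)
    (q : L) : P *ᵥ lagrangianCoord P L q = (q : E2 n).1 := by
  rw [lagrangianCoord_apply, mulVec_add, mulVec_mulVec, Matrix.mul_sub, Matrix.mul_one, hPP,
    sub_self, zero_mulVec, add_zero]
  exact (hPL _).2 ⟨_, q.2⟩

theorem lagrangianCoord_bijective (hL : IsLagrangian (L : Set (E2 n))) (hP : P.IsSymm)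
    (hPP : P * P = P) (hPL : ∀ x, P *ᵥ x = x ↔ ∃ y, (x, y) ∈ L) :
    Function.Bijective (lagrangianCoord P L) := by
  refine ⟨(injective_iff_map_eq_zero _).2 fun q hq => ?_, fun p => ?_⟩
  · have h1 : (q : E2 n).1 = 0 := by rw [← mulVec_lagrangianCoord hPP hPL, hq, mulVec_zero]
    rw [lagrangianCoord_apply, h1, zero_add, sub_mulVec, one_mulVec, sub_eq_zero] at hq
    have hq0 : ((0 : Fin n → ℝ), (q : E2 n).2) ∈ L := h1 ▸ q.2
    exact Subtype.ext (Prod.ext h1 (hL.eq_zero_of_mk_zero_mem hPL hq0 hq.symm))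
  · obtain ⟨y, hy⟩ := (hPL (P *ᵥ p)).1 (by rw [mulVec_mulVec, hPP])
    refine ⟨⟨(P *ᵥ p, y) + (0, (1 - P) *ᵥ (p - y)),
      L.add_mem hy (hL.mk_zero_one_sub_mulVec_mem hP hPL _)⟩, ?_⟩
    show P *ᵥ p + 0 + (1 - P) *ᵥ (y + (1 - P) *ᵥ (p - y)) = p
    rw [mulVec_add (1 - P), mulVec_mulVec, (IsIdempotentElem.one_sub hPP).eq, ← mulVec_add,
      add_sub_cancel, add_zero, sub_mulVec, one_mulVec, add_sub_cancel]

theorem IsLagrangian.exists_isPWPair (hL : IsLagrangian (L : Set (E2 n))) :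
    ∃ P W : Matrix (Fin n) (Fin n) ℝ, IsPWPair P W ∧ (L : Set (E2 n)) = LPW P W := by
  obtain ⟨P, hP, hPP, hPL⟩ := (L.map (LinearMap.fst ℝ _ _)).exists_isSymm_projection_matrix
  replace hPL : ∀ x, P *ᵥ x = x ↔ ∃ y, (x, y) ∈ L := by simpa using hPL
  let e := LinearEquiv.ofBijective _ (lagrangianCoord_bijective hL hP hPP hPL)
  let H : (Fin n → ℝ) →ₗ[ℝ] E2 n := L.subtype ∘ₗ e.symm.toLinearMap
  let W := LinearMap.toMatrix' (LinearMap.snd ℝ _ _ ∘ₗ H)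
  have hmem (p : Fin n → ℝ) : H p ∈ L := (e.symm p).2
  have hcoord (p : Fin n → ℝ) : (H p).1 + (1 - P) *ᵥ (H p).2 = p := e.apply_symm_apply p
  have hH (p : Fin n → ℝ) : H p = (P *ᵥ p, W *ᵥ p) := by
    refine Prod.ext ?_ (LinearMap.toMatrix'_mulVec (LinearMap.snd ℝ _ _ ∘ₗ H) p).symm
    calc (H p).1 = P *ᵥ lagrangianCoord P L (e.symm p) :=
          (mulVec_lagrangianCoord hPP hPL _).symm
      _ = P *ᵥ p := congrArg (P *ᵥ ·) (e.apply_symm_apply p)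
  refine ⟨P, W, ⟨hP, ?_, hPP, ?_⟩, ?_⟩
  · refine Matrix.isSymm_iff_mulVec_dotProduct.2 fun p p' => ?_
    have h := hL.coord_dotProduct_snd_comm hP (hmem p) (hmem p')
    rw [hcoord, hcoord, hH, hH] at h
    exact h.symm
  · refine ext_iff_mulVec.2 fun p => ?_
    have hker : e.symm ((1 - P) *ᵥ p) =
        ⟨(0, (1 - P) *ᵥ p), hL.mk_zero_one_sub_mulVec_mem hP hPL p⟩ := by
      refine e.symm_apply_eq.2 ?_
      show (1 - P) *ᵥ p = 0 + (1 - P) *ᵥ ((1 - P) *ᵥ p)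
      rw [zero_add, mulVec_mulVec, (IsIdempotentElem.one_sub hPP).eq]
    calc (W * (1 - P)) *ᵥ p = (H ((1 - P) *ᵥ p)).2 := by rw [← mulVec_mulVec, hH]
      _ = (1 - P) *ᵥ p := by simp only [H, LinearMap.comp_apply, LinearEquiv.coe_coe, hker]; rfl
  · refine Set.ext fun q => ⟨fun hq => ⟨e ⟨q, hq⟩, ?_⟩, ?_⟩
    · rw [← hH]
      simp [H]
    · rintro ⟨p, rfl⟩
      rw [← hH]
      exact hmem p

end LagrangianChart

theorem stmt_6_general (n : ℕ)
    (P W : ℕ → Matrix (Fin n) (Fin n) ℝ)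
    (hPW : ∀ k, IsPWPair (P k) (W k))
    (Q : ℕ → (((Fin n → ℝ) × (Fin n → ℝ)) →L[ℝ] ((Fin n → ℝ) × (Fin n → ℝ))))
    (hQ : ∀ k, IsOrthProj (Q k) (LPW (P k) (W k)))
    (L : Submodule ℝ ((Fin n → ℝ) × (Fin n → ℝ)))
    (QL : ((Fin n → ℝ) × (Fin n → ℝ)) →L[ℝ] ((Fin n → ℝ) × (Fin n → ℝ)))
    (hQL : IsOrthProj QL (L : Set ((Fin n → ℝ) × (Fin n → ℝ))))
    (hconv : Filter.Tendsto Q Filter.atTop (nhds QL)) :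
    ∃ P' W' : Matrix (Fin n) (Fin n) ℝ,
      IsPWPair P' W' ∧ (L : Set ((Fin n → ℝ) × (Fin n → ℝ))) = LPW P' W' := by
  have hJ : ∀ v, QL (rotJ n v) + rotJ n (QL v) = rotJ n v :=
    (isClosed_setOf_anticomm n).mem_of_tendsto hconv
      (Filter.Eventually.of_forall fun k => (hQ k).anticomm_of_isLagrangian (hPW k).isLagrangian)
  exact (hQL.isLagrangian_of_anticomm hJ).exists_isPWPair

/-- **Closedness of the class `Z_n^{P,W}`.** If the orthogonal projections onto subspaces
`L_k = L(P_k, W_k)` represented by PW-pairs converge (in operator norm) to the orthogonal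
projection onto a linear subspace `L` of `ℝⁿ × ℝⁿ`, then `L` is itself represented by a
PW-pair. -/
theorem stmt_6 (n : ℕ) (hn : 1 ≤ n)
    (P W : ℕ → Matrix (Fin n) (Fin n) ℝ)
    (hPW : ∀ k, IsPWPair (P k) (W k))
    (Q : ℕ → (((Fin n → ℝ) × (Fin n → ℝ)) →L[ℝ] ((Fin n → ℝ) × (Fin n → ℝ))))
    (hQ : ∀ k, IsOrthProj (Q k) (LPW (P k) (W k)))
    (L : Submodule ℝ ((Fin n → ℝ) × (Fin n → ℝ)))
    (QL : ((Fin n → ℝ) × (Fin n → ℝ)) →L[ℝ] ((Fin n → ℝ) × (Fin n → ℝ)))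
    (hQL : IsOrthProj QL (L : Set ((Fin n → ℝ) × (Fin n → ℝ))))
    (hconv : Filter.Tendsto Q Filter.atTop (nhds QL)) :
    ∃ P' W' : Matrix (Fin n) (Fin n) ℝ,
      IsPWPair P' W' ∧ (L : Set ((Fin n → ℝ) × (Fin n → ℝ))) = LPW P' W' :=
  stmt_6_general n P W hPW Q hQ L QL hQL hconv
end

section
/- Let (P, W) be a PW-pair of real n×n matrices with W positive definite and P ≠ 0. Then W is invertible and the spectral (ℓ²-operator) norm of P W⁻¹ satisfies ‖P W⁻¹‖ = 1 / min{ ⟨s, W s⟩ : s ∈ range P, ‖s‖ = 1 }, where the minimum is over all unit vectors in the range of P (equivalently, ‖P W⁻¹‖ = 1 / min{ ⟨s, PWP s⟩ : ‖P s‖ = 1 }). -/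
open Matrix

/-!
Since `W` and `P` commute, `A = P W⁻¹` satisfies `W A = P` and maps into `V = range P`. Let `m`
be the minimum of `⟪s, W s⟫` over unit vectors `s ∈ V`, attained at some `s₀` by compactness, so
that `m ‖z‖² ≤ ⟪z, W z⟫` on `V`. For `z = A x` this reads `m ‖z‖² ≤ ⟪z, P x⟫ = ⟪z, x⟫ ≤ ‖z‖ ‖x‖`,
whence `‖A‖ ≤ 1 / m`. Conversely, minimality makes `s₀` a critical point:
`⟪v, W s₀⟫ = m ⟪v, s₀⟫` for `v ∈ V`. Taking `v = A s₀`, where `W v = s₀`, gives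
`m ⟪A s₀, s₀⟫ = 1`, whence `‖A‖ ≥ 1 / m`.
-/

open scoped RealInnerProductSpace

section QuadraticForm

variable {E : Type*} [NormedAddCommGroup E] [InnerProductSpace ℝ E]

theorem Submodule.exists_forall_sphere_inner_apply_le [FiniteDimensional ℝ E]
    {V : Submodule ℝ E} (hV : V ≠ ⊥) (W : E →L[ℝ] E) :
    ∃ s₀ ∈ V, ‖s₀‖ = 1 ∧ ∀ s ∈ V, ‖s‖ = 1 → ⟪s₀, W s₀⟫ ≤ ⟪s, W s⟫ := by
  have hK : IsCompact ((V : Set E) ∩ Metric.sphere 0 1) :=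
    (isCompact_sphere 0 1).inter_left V.closed_of_finiteDimensional
  obtain ⟨v, hvV, hv0⟩ := Submodule.exists_mem_ne_zero_of_ne_bot hV
  have hne : ((V : Set E) ∩ Metric.sphere 0 1).Nonempty :=
    ⟨‖v‖⁻¹ • v, V.smul_mem _ hvV, by
      rw [mem_sphere_zero_iff_norm, norm_smul, norm_inv, norm_norm,
        inv_mul_cancel₀ (norm_ne_zero_iff.mpr hv0)]⟩
  obtain ⟨s₀, ⟨hs₀V, hs₀1⟩, hmin⟩ :=
    hK.exists_isMinOn hne (continuous_id.inner (𝕜 := ℝ) W.continuous).continuousOn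
  exact ⟨s₀, hs₀V, by simpa using hs₀1, fun s hsV hs1 => hmin ⟨hsV, by simpa using hs1⟩⟩

theorem mul_norm_sq_le_inner_apply_of_forall_sphere {V : Submodule ℝ E} {W : E →L[ℝ] E}
    {m : ℝ} (h : ∀ s ∈ V, ‖s‖ = 1 → m ≤ ⟪s, W s⟫) {s : E} (hs : s ∈ V) :
    m * ‖s‖ ^ 2 ≤ ⟪s, W s⟫ := by
  rcases eq_or_ne s 0 with rfl | hs0
  · simp
  have hns : 0 < ‖s‖ := norm_pos_iff.mpr hs0
  have := h (‖s‖⁻¹ • s) (V.smul_mem _ hs) (by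
    rw [norm_smul, norm_inv, norm_norm, inv_mul_cancel₀ hns.ne'])
  rw [map_smul, real_inner_smul_left, real_inner_smul_right] at this
  calc m * ‖s‖ ^ 2 ≤ ‖s‖⁻¹ * (‖s‖⁻¹ * ⟪s, W s⟫) * ‖s‖ ^ 2 := by gcongr
    _ = ⟪s, W s⟫ := by field_simp

variable [CompleteSpace E]

theorem inner_apply_eq_mul_inner_of_mul_norm_sq_le {V : Submodule ℝ E} {W : E →L[ℝ] E}
    (hW : IsSelfAdjoint W) {m : ℝ} (hm : ∀ s ∈ V, m * ‖s‖ ^ 2 ≤ ⟪s, W s⟫)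
    {s₀ : E} (hs₀ : s₀ ∈ V) (heq : ⟪s₀, W s₀⟫ = m * ‖s₀‖ ^ 2) {v : E} (hv : v ∈ V) :
    ⟪v, W s₀⟫ = m * ⟪v, s₀⟫ := by
  have hsymm : ⟪s₀, W v⟫ = ⟪v, W s₀⟫ := by
    rw [real_inner_comm]; exact hW.isSymmetric v s₀
  -- `t ↦ ⟪s₀ + t • v, W (s₀ + t • v)⟫ - m * ‖s₀ + t • v‖ ^ 2` is a nonnegative quadratic
  -- without constant term, so its linear coefficient vanishes.
  have hquad : ∀ t : ℝ, 0 ≤ (⟪v, W v⟫ - m * ‖v‖ ^ 2) * (t * t)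
      + 2 * (⟪v, W s₀⟫ - m * ⟪v, s₀⟫) * t + 0 := by
    intro t
    have h := hm (s₀ + t • v) (V.add_mem hs₀ (V.smul_mem t hv))
    simp only [norm_add_sq_real, norm_smul, map_add, map_smul, inner_add_left, inner_add_right,
      real_inner_smul_left, real_inner_smul_right, hsymm, real_inner_comm v s₀, heq,
      Real.norm_eq_abs, mul_pow, sq_abs] at h
    linear_combination h
  have := discrim_le_zero hquad
  rw [discrim] at this
  nlinarith [sq_nonneg (⟪v, W s₀⟫ - m * ⟪v, s₀⟫)]

theorem ContinuousLinearMap.opNorm_le_one_div_of_mul_norm_sq_le {V : Submodule ℝ E}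
    {P W A : E →L[ℝ] E} (hP : IsSelfAdjoint P) (hPV : ∀ v ∈ V, P v = v) (hWA : W * A = P)
    (hA : ∀ x, A x ∈ V) {m : ℝ} (hm0 : 0 < m) (hm : ∀ s ∈ V, m * ‖s‖ ^ 2 ≤ ⟪s, W s⟫) :
    ‖A‖ ≤ 1 / m := by
  refine A.opNorm_le_bound (by positivity) fun x => ?_
  have key : m * ‖A x‖ ^ 2 ≤ ‖A x‖ * ‖x‖ := calc
    m * ‖A x‖ ^ 2 ≤ ⟪A x, W (A x)⟫ := hm _ (hA x)
    _ = ⟪P (A x), x⟫ := by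
      rw [show W (A x) = P x from DFunLike.congr_fun hWA x]; exact (hP.isSymmetric _ _).symm
    _ = ⟪A x, x⟫ := by rw [hPV _ (hA x)]
    _ ≤ ‖A x‖ * ‖x‖ := real_inner_le_norm _ _
  rw [one_div_mul_eq_div, le_div_iff₀ hm0]
  rcases (norm_nonneg (A x)).eq_or_lt with h0 | hpos
  · rw [← h0, zero_mul]; exact norm_nonneg x
  · nlinarith

theorem ContinuousLinearMap.one_div_le_opNorm_of_mul_norm_sq_le {V : Submodule ℝ E}
    {P W A : E →L[ℝ] E} (hW : IsSelfAdjoint W) (hPV : ∀ v ∈ V, P v = v) (hWA : W * A = P)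
    (hA : ∀ x, A x ∈ V) {m : ℝ} (hm0 : 0 < m) (hm : ∀ s ∈ V, m * ‖s‖ ^ 2 ≤ ⟪s, W s⟫)
    {s₀ : E} (hs₀ : s₀ ∈ V) (hs₀1 : ‖s₀‖ = 1) (heq : ⟪s₀, W s₀⟫ = m) :
    1 / m ≤ ‖A‖ := by
  have hWz : W (A s₀) = s₀ := (DFunLike.congr_fun hWA s₀).trans (hPV _ hs₀)
  have h1 : m * ⟪A s₀, s₀⟫ = 1 := calc
    m * ⟪A s₀, s₀⟫ = ⟪A s₀, W s₀⟫ :=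
      (inner_apply_eq_mul_inner_of_mul_norm_sq_le hW hm hs₀ (by rw [hs₀1, heq]; ring) (hA s₀)).symm
    _ = ⟪W (A s₀), s₀⟫ := (hW.isSymmetric _ _).symm
    _ = 1 := by rw [hWz, real_inner_self_eq_norm_sq, hs₀1, one_pow]
  rw [div_le_iff₀ hm0, ← h1, mul_comm ‖A‖]
  gcongr
  calc ⟪A s₀, s₀⟫ ≤ ‖A s₀‖ * ‖s₀‖ := real_inner_le_norm _ _
    _ ≤ ‖A‖ := by simpa [hs₀1] using A.le_opNorm s₀

theorem ContinuousLinearMap.opNorm_eq_one_div_sInf [FiniteDimensional ℝ E] {P W A : E →L[ℝ] E}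
    (hP : IsSelfAdjoint P) (hPP : IsIdempotentElem P) (hW : IsSelfAdjoint W) (hWA : W * A = P)
    (hA : ∀ x, A x ∈ Set.range P) (hpos : ∀ s ∈ Set.range P, s ≠ 0 → 0 < ⟪s, W s⟫)
    (hP0 : P ≠ 0) :
    ‖A‖ = 1 / sInf {r | ∃ s ∈ Set.range P, ‖s‖ = 1 ∧ r = ⟪s, W s⟫} := by
  set V := LinearMap.range (P : E →ₗ[ℝ] E)
  have hV : V ≠ ⊥ := by
    rwa [Ne, LinearMap.range_eq_bot, ← ContinuousLinearMap.toLinearMap_zero,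
      ContinuousLinearMap.coe_inj]
  have hPV : ∀ v ∈ V, P v = v := by
    rintro _ ⟨y, rfl⟩
    exact DFunLike.congr_fun hPP y
  obtain ⟨s₀, hs₀V, hs₀1, hmin⟩ := Submodule.exists_forall_sphere_inner_apply_le hV W
  have hleast : IsLeast {r | ∃ s ∈ Set.range P, ‖s‖ = 1 ∧ r = ⟪s, W s⟫} ⟪s₀, W s₀⟫ :=
    ⟨⟨s₀, hs₀V, hs₀1, rfl⟩, by rintro r ⟨s, hsV, hs1, rfl⟩; exact hmin s hsV hs1⟩
  have hm0 : 0 < ⟪s₀, W s₀⟫ := hpos s₀ hs₀V (norm_ne_zero_iff.mp (by simp [hs₀1]))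
  have hm := fun s (hs : s ∈ V) => mul_norm_sq_le_inner_apply_of_forall_sphere hmin hs
  rw [hleast.csInf_eq]
  exact le_antisymm (opNorm_le_one_div_of_mul_norm_sq_le hP hPV hWA hA hm0 hm)
    (one_div_le_opNorm_of_mul_norm_sq_le hW hPV hWA hA hm0 hm hs₀V hs₀1 rfl)

end QuadraticForm

theorem EuclideanSpace.norm_eq_sqrt_dotProduct {ι : Type*} [Fintype ι]
    (x : EuclideanSpace ℝ ι) : ‖x‖ = √(x.ofLp ⬝ᵥ x.ofLp) := by
  rw [norm_eq_sqrt_real_inner, EuclideanSpace.inner_eq_star_dotProduct, star_trivial]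

section toEuclideanCLM

variable {ι : Type*} [Fintype ι] [DecidableEq ι]

theorem Matrix.mem_range_toEuclideanCLM_iff {P : Matrix ι ι ℝ} {x : EuclideanSpace ℝ ι} :
    x ∈ Set.range (toEuclideanCLM (𝕜 := ℝ) P) ↔ ∃ p, x.ofLp = P *ᵥ p := by
  constructor
  · rintro ⟨y, rfl⟩
    exact ⟨y.ofLp, ofLp_toEuclideanCLM P y⟩
  · rintro ⟨p, hp⟩
    exact ⟨WithLp.toLp 2 p, by rw [toEuclideanCLM_toLp, ← hp, WithLp.toLp_ofLp]⟩

theorem Matrix.setOf_dotProduct_eq_setOf_inner (P W : Matrix ι ι ℝ) :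
    {r : ℝ | ∃ s : ι → ℝ, (∃ p : ι → ℝ, s = P *ᵥ p) ∧ √(s ⬝ᵥ s) = 1 ∧ r = s ⬝ᵥ (W *ᵥ s)} =
      {r | ∃ s ∈ Set.range (toEuclideanCLM (𝕜 := ℝ) P), ‖s‖ = 1 ∧
        r = ⟪s, toEuclideanCLM (𝕜 := ℝ) W s⟫} := by
  ext r
  simp only [Set.mem_ofPred_eq, mem_range_toEuclideanCLM_iff, inner_toEuclideanCLM,
    EuclideanSpace.norm_eq_sqrt_dotProduct]
  exact (WithLp.equiv 2 (ι → ℝ)).symm.exists_congr_left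

end toEuclideanCLM

namespace IsPWPair

variable {n : ℕ} {P W : Matrix (Fin n) (Fin n) ℝ}

theorem commute (h : IsPWPair P W) : Commute W P := by
  obtain ⟨hP, hW, -, hW1P⟩ := h
  have h1PW : (1 - P) * W = 1 - P := by
    simpa [transpose_mul, transpose_sub, hP.eq, hW.eq] using congrArg transpose hW1P
  have := hW1P.trans h1PW.symm
  rw [mul_sub, sub_mul, mul_one, one_mul] at this
  exact sub_right_injective this

theorem mul_mul_inv (h : IsPWPair P W) (hW : IsUnit W) : W * (P * W⁻¹) = P := by
  rw [← mul_assoc, h.commute.eq, mul_assoc, mul_nonsing_inv _ ((isUnit_iff_isUnit_det W).mp hW),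
    mul_one]

end IsPWPair

theorem stmt_9_general (n : ℕ)
    (P W : Matrix (Fin n) (Fin n) ℝ) (hPW : IsPWPair P W) (hP : P ≠ 0)
    (hpd : ∀ z : Fin n → ℝ, z ≠ 0 → 0 < z ⬝ᵥ (W *ᵥ z)) :
    IsUnit W ∧
      ‖Matrix.toEuclideanCLM (𝕜 := ℝ) (P * W⁻¹)‖ =
        1 / sInf {r : ℝ | ∃ s : Fin n → ℝ,
            (∃ p : Fin n → ℝ, s = P *ᵥ p) ∧ Real.sqrt (s ⬝ᵥ s) = 1 ∧
            r = s ⬝ᵥ (W *ᵥ s)} := by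
  have ⟨hPs, hWs, hPP, _⟩ := hPW
  have hWu : IsUnit W :=
    (PosDef.of_dotProduct_mulVec_pos (isHermitian_iff_isSymm.mpr hWs) fun x hx => by
      simpa using hpd x hx).isUnit
  refine ⟨hWu, ?_⟩
  set T := toEuclideanCLM (𝕜 := ℝ) (n := Fin n)
  rw [setOf_dotProduct_eq_setOf_inner]
  refine ContinuousLinearMap.opNorm_eq_one_div_sInf
    ((isHermitian_iff_isSymm.mpr hPs).isSelfAdjoint.map T) ?_
    ((isHermitian_iff_isSymm.mpr hWs).isSelfAdjoint.map T) ?_ ?_ ?_ ?_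
  · rw [IsIdempotentElem, ← map_mul, hPP]
  · rw [← map_mul, hPW.mul_mul_inv hWu]
  · intro x
    rw [map_mul]
    exact ⟨_, rfl⟩
  · rintro s - hs
    rw [inner_toEuclideanCLM]
    exact hpd _ (by simpa using hs)
  · exact (map_ne_zero_iff T T.injective).mpr hP

/-- **Norm formula for `C_L = P W⁻¹`.** If `(P,W)` is a PW-pair with `W` positive definite
and `P ≠ 0`, then `W` is invertible and the spectral norm of `P W⁻¹` equals
`1 / min{⟨s, Ws⟩ : s ∈ range P, ‖s‖ = 1}`. -/
theorem stmt_9 (n : ℕ) (hn : 1 ≤ n)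
    (P W : Matrix (Fin n) (Fin n) ℝ) (hPW : IsPWPair P W) (hP : P ≠ 0)
    (hpd : ∀ z : Fin n → ℝ, z ≠ 0 → 0 < z ⬝ᵥ (W *ᵥ z)) :
    IsUnit W ∧
      ‖Matrix.toEuclideanCLM (𝕜 := ℝ) (P * W⁻¹)‖ =
        1 / sInf {r : ℝ | ∃ s : Fin n → ℝ,
            (∃ p : Fin n → ℝ, s = P *ᵥ p) ∧ Real.sqrt (s ⬝ᵥ s) = 1 ∧
            r = s ⬝ᵥ (W *ᵥ s)} :=
  stmt_9_general n P W hPW hP hpd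
end

section
/- Let f : ℝⁿ → ℝ be continuously differentiable, let g : ℝⁿ → ℝ ∪ {+∞} be proper and lower semicontinuous, let α, β ∈ (0,1) and λ̄ > 0. Let (x_k), (z_k) be sequences in ℝⁿ and λ_k ∈ (0, λ̄] such that for every k: (a) z_k ∈ T_{λ_k}(x_k); (b) f(z_k) ≤ f(x_k) + ⟨∇f(x_k), z_k − x_k⟩ + (α/(2λ_k))‖z_k − x_k‖²; and (c) φ_{λ_{k+1}}(x_{k+1}) ≤ φ_{λ_k}(x_k) − (β(1−α)/(2λ_k))‖z_k − x_k‖². If inf_k ( f(z_k) + g(z_k) ) > −∞, then: (i) the sequence φ_{λ_k}(x_k) is nonincreasing and converges to a finite limit; (ii) Σ_{k=0}^∞ ‖z_k − x_k‖²/(2λ_k) < ∞; (iii) ‖z_k − x_k‖ → 0 as k → ∞. -/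
/-!
Since `z_k` minimizes `ψ_{λ_k}(x_k, ·)`, the envelope `φ_{λ_k}(x_k)` equals `ψ_{λ_k}(x_k, z_k)`,
and by (b) with `α ≤ 1` this dominates `f(z_k) + g(z_k)`; so the envelope values are bounded below,
and finite because `g` is proper. Condition (c) makes them decrease by at least a fixed positive
multiple `β(1-α)` of `‖z_k - x_k‖²/(2λ_k)`, so they converge and the decreases telescope to a
convergent series. Since `λ_k ≤ λ̄`, the terms of that series control `‖z_k - x_k‖²`.
-/

open scoped RealInnerProductSpace
open Filter Topology Finset

/-- `ψ_λ(x,z) := f(x) + ⟪∇f(x), z−x⟫ + ‖z−x‖²/(2λ) + g(z)`, as an extended real. -/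
noncomputable def psiFB {n : ℕ} (f : EuclideanSpace ℝ (Fin n) → ℝ)
    (g : EuclideanSpace ℝ (Fin n) → EReal) (lam : ℝ)
    (x z : EuclideanSpace ℝ (Fin n)) : EReal :=
  ((f x + ⟪gradient f x, z - x⟫ + ‖z - x‖ ^ 2 / (2 * lam) : ℝ) : EReal) + g z

/-- `T_λ(x)`: the set of global minimizers of `z ↦ ψ_λ(x,z)`. -/
def TFB {n : ℕ} (f : EuclideanSpace ℝ (Fin n) → ℝ)
    (g : EuclideanSpace ℝ (Fin n) → EReal) (lam : ℝ)
    (x : EuclideanSpace ℝ (Fin n)) : Set (EuclideanSpace ℝ (Fin n)) :=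
  {z | ∀ w, psiFB f g lam x z ≤ psiFB f g lam x w}

/-- The forward–backward envelope `φ_λ(x) := inf_z ψ_λ(x,z)`. -/
noncomputable def phiFB {n : ℕ} (f : EuclideanSpace ℝ (Fin n) → ℝ)
    (g : EuclideanSpace ℝ (Fin n) → EReal) (lam : ℝ)
    (x : EuclideanSpace ℝ (Fin n)) : EReal :=
  ⨅ z, psiFB f g lam x z

section Descent

variable {r d : ℕ → ℝ} {c : ℝ}

lemma antitone_of_succ_le_sub (hd : ∀ k, 0 ≤ d k) (hr : ∀ k, r (k + 1) ≤ r k - d k) :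
    Antitone r :=
  antitone_nat_of_succ_le fun k => by linarith [hd k, hr k]

lemma sum_range_le_sub_of_succ_le_sub (hr : ∀ k, r (k + 1) ≤ r k - d k) (N : ℕ) :
    ∑ i ∈ range N, d i ≤ r 0 - r N :=
  calc ∑ i ∈ range N, d i ≤ ∑ i ∈ range N, (r i - r (i + 1)) :=
        sum_le_sum fun i _ => by linarith [hr i]
    _ = r 0 - r N := sum_range_sub' r N

lemma summable_of_succ_le_sub (hd : ∀ k, 0 ≤ d k) (hr : ∀ k, r (k + 1) ≤ r k - d k)
    (hc : ∀ k, c ≤ r k) : Summable d :=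
  summable_of_sum_range_le (c := r 0 - c) hd fun N => by
    linarith [sum_range_le_sub_of_succ_le_sub hr N, hc N]

lemma EReal.antitone_tendsto_summable_of_succ_le_sub {φ : ℕ → EReal} (hd : ∀ k, 0 ≤ d k)
    (htop : ∀ k, φ k ≠ ⊤) (hc : ∀ k, (c : EReal) ≤ φ k)
    (hφ : ∀ k, φ (k + 1) ≤ φ k - (d k : EReal)) :
    (Antitone φ ∧ ∃ L : ℝ, Tendsto φ atTop (𝓝 (L : EReal))) ∧ Summable d := by
  have hbot (k : ℕ) : φ k ≠ ⊥ := ne_bot_of_le_ne_bot (EReal.coe_ne_bot c) (hc k)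
  obtain ⟨r, rfl⟩ : ∃ r : ℕ → ℝ, φ = fun k => (r k : EReal) :=
    ⟨fun k => (φ k).toReal, funext fun k => (EReal.coe_toReal (htop k) (hbot k)).symm⟩
  simp only [← EReal.coe_sub, EReal.coe_le_coe_iff] at hc hφ
  have hanti := antitone_of_succ_le_sub hd hφ
  have hbdd : BddBelow (Set.range r) := ⟨c, by rintro _ ⟨k, rfl⟩; exact hc k⟩
  exact ⟨⟨fun a b hab => EReal.coe_le_coe_iff.2 (hanti hab),
    ⨅ k, r k, EReal.tendsto_coe.2 (tendsto_atTop_ciInf hanti hbdd)⟩,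
    summable_of_succ_le_sub hd hφ hc⟩

end Descent

lemma tendsto_norm_zero_of_summable_sq_div {E : Type*} [SeminormedAddCommGroup E]
    {v : ℕ → E} {lam : ℕ → ℝ} {L : ℝ} (hlam : ∀ k, lam k ∈ Set.Ioc 0 L)
    (hsum : Summable fun k => ‖v k‖ ^ 2 / (2 * lam k)) :
    Tendsto (fun k => ‖v k‖) atTop (𝓝 0) := by
  have hsq : Tendsto (fun k => ‖v k‖ ^ 2) atTop (𝓝 0) := by
    refine squeeze_zero (fun k => by positivity) (fun k => ?_)
      (by simpa using hsum.tendsto_atTop_zero.const_mul (2 * L))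
    obtain ⟨hpos, hle⟩ := hlam k
    rw [mul_div_assoc', le_div_iff₀ (by positivity)]
    nlinarith [sq_nonneg ‖v k‖]
  simpa [Real.sqrt_sq (norm_nonneg _)] using hsq.sqrt

section ForwardBackward

variable {n : ℕ} {f : EuclideanSpace ℝ (Fin n) → ℝ} {g : EuclideanSpace ℝ (Fin n) → EReal}
  {lam : ℝ} {x z : EuclideanSpace ℝ (Fin n)}

lemma phiFB_eq_psiFB_of_mem_TFB (hz : z ∈ TFB f g lam x) :
    phiFB f g lam x = psiFB f g lam x z :=
  le_antisymm (iInf_le _ _) (le_iInf hz)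

lemma phiFB_ne_top {w : EuclideanSpace ℝ (Fin n)} (hw : g w ≠ ⊤) : phiFB f g lam x ≠ ⊤ :=
  ((iInf_le _ w).trans_lt (EReal.add_lt_top (EReal.coe_ne_top _) hw)).ne

lemma coe_add_le_psiFB
    (h : f z ≤ f x + ⟪gradient f x, z - x⟫ + ‖z - x‖ ^ 2 / (2 * lam)) :
    (f z : EReal) + g z ≤ psiFB f g lam x z :=
  add_le_add_left (EReal.coe_le_coe_iff.2 h) _

end ForwardBackward

theorem stmt_14_general (n : ℕ)
    (f : EuclideanSpace ℝ (Fin n) → ℝ)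
    (g : EuclideanSpace ℝ (Fin n) → EReal)
    (hgproper : ∃ w, g w ≠ ⊤)
    (α β : ℝ) (hα : α ∈ Set.Ioo (0 : ℝ) 1) (hβ : β ∈ Set.Ioo (0 : ℝ) 1)
    (lamBar : ℝ)
    (x z : ℕ → EuclideanSpace ℝ (Fin n)) (lam : ℕ → ℝ)
    (hlam : ∀ k, lam k ∈ Set.Ioc (0 : ℝ) lamBar)
    (ha : ∀ k, z k ∈ TFB f g (lam k) (x k))
    (hb : ∀ k, f (z k) ≤ f (x k) + ⟪gradient f (x k), z k - x k⟫ +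
      α / (2 * lam k) * ‖z k - x k‖ ^ 2)
    (hc : ∀ k, phiFB f g (lam (k + 1)) (x (k + 1)) ≤
      phiFB f g (lam k) (x k) -
        ((β * (1 - α) / (2 * lam k) * ‖z k - x k‖ ^ 2 : ℝ) : EReal))
    (hbelow : ∃ c : ℝ, ∀ k, ((c : ℝ) : EReal) ≤ ((f (z k) : ℝ) : EReal) + g (z k)) :
    (Antitone (fun k => phiFB f g (lam k) (x k)) ∧
      ∃ φbar : ℝ, Filter.Tendsto (fun k => phiFB f g (lam k) (x k)) Filter.atTop
        (nhds ((φbar : ℝ) : EReal))) ∧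
    Summable (fun k => ‖z k - x k‖ ^ 2 / (2 * lam k)) ∧
    Filter.Tendsto (fun k => ‖z k - x k‖) Filter.atTop (nhds 0) := by
  obtain ⟨c, hcz⟩ := hbelow
  obtain ⟨w, hw⟩ := hgproper
  set e : ℕ → ℝ := fun k => ‖z k - x k‖ ^ 2 / (2 * lam k)
  have hκ : 0 < β * (1 - α) := mul_pos hβ.1 (by linarith [hα.2])
  have he (k : ℕ) : 0 ≤ e k := div_nonneg (sq_nonneg _) (by linarith [(hlam k).1])
  have hlow (k : ℕ) : (c : EReal) ≤ phiFB f g (lam k) (x k) := by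
    refine (hcz k).trans ?_
    rw [phiFB_eq_psiFB_of_mem_TFB (ha k)]
    refine coe_add_le_psiFB ((hb k).trans ?_)
    have : α / (2 * lam k) * ‖z k - x k‖ ^ 2 = α * e k := by ring
    linarith [mul_le_of_le_one_left (he k) hα.2.le]
  have hdesc (k : ℕ) : phiFB f g (lam (k + 1)) (x (k + 1)) ≤
      phiFB f g (lam k) (x k) - ((β * (1 - α) * e k : ℝ) : EReal) := by
    convert hc k using 3
    ring
  obtain ⟨hφ, hsum⟩ := EReal.antitone_tendsto_summable_of_succ_le_sub
    (fun k => mul_nonneg hκ.le (he k)) (fun _ => phiFB_ne_top hw) hlow hdesc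
  have hesum : Summable e := (summable_mul_left_iff hκ.ne').1 hsum
  exact ⟨hφ, hesum, tendsto_norm_zero_of_summable_sq_div hlam hesum⟩

/-- **Global convergence properties of the iterates of BasGSSN.**
Under conditions (a), (b), (c) on the iterates and boundedness below of `f(z_k) + g(z_k)`:
(i) `φ_{λ_k}(x_k)` is nonincreasing and converges to a finite limit;
(ii) `Σ_k ‖z_k − x_k‖²/(2λ_k) < ∞`;
(iii) `‖z_k − x_k‖ → 0`. -/
theorem stmt_14 (n : ℕ) (hn : 1 ≤ n)
    (f : EuclideanSpace ℝ (Fin n) → ℝ) (hf : ContDiff ℝ 1 f)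
    (g : EuclideanSpace ℝ (Fin n) → EReal)
    (hgbot : ∀ w, g w ≠ ⊥) (hgproper : ∃ w, g w ≠ ⊤)
    (hglsc : LowerSemicontinuous g)
    (α β : ℝ) (hα : α ∈ Set.Ioo (0 : ℝ) 1) (hβ : β ∈ Set.Ioo (0 : ℝ) 1)
    (lamBar : ℝ) (hlamBar : 0 < lamBar)
    (x z : ℕ → EuclideanSpace ℝ (Fin n)) (lam : ℕ → ℝ)
    (hlam : ∀ k, lam k ∈ Set.Ioc (0 : ℝ) lamBar)
    (ha : ∀ k, z k ∈ TFB f g (lam k) (x k))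
    (hb : ∀ k, f (z k) ≤ f (x k) + ⟪gradient f (x k), z k - x k⟫ +
      α / (2 * lam k) * ‖z k - x k‖ ^ 2)
    (hc : ∀ k, phiFB f g (lam (k + 1)) (x (k + 1)) ≤
      phiFB f g (lam k) (x k) -
        ((β * (1 - α) / (2 * lam k) * ‖z k - x k‖ ^ 2 : ℝ) : EReal))
    (hbelow : ∃ c : ℝ, ∀ k, ((c : ℝ) : EReal) ≤ ((f (z k) : ℝ) : EReal) + g (z k)) :
    (Antitone (fun k => phiFB f g (lam k) (x k)) ∧
      ∃ φbar : ℝ, Filter.Tendsto (fun k => phiFB f g (lam k) (x k)) Filter.atTop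
        (nhds ((φbar : ℝ) : EReal))) ∧
    Summable (fun k => ‖z k - x k‖ ^ 2 / (2 * lam k)) ∧
    Filter.Tendsto (fun k => ‖z k - x k‖) Filter.atTop (nhds 0) :=
  stmt_14_general n f g hgproper α β hα hβ lamBar x z lam hlam ha hb hc hbelow
end
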